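/- Let G and H be multigraphs such that H is isomorphic to a topological subgraph of G, and let n ≥ 1. Then T_{H,n} is a simple projection of T_{G,n}: T_{H,n} ≤_s T_{G,n}. -/
import Mathlib


open Classical Finset MvPolynomial

/-- A multigraph on the ambient vertex type `V`: a finite edge type together with an
assignment of an unordered pair of distinct end-vertices to every edge.
Parallel edges are allowed. -/
structure Multigraph (V : Type) where
  E : Type
  [decE : DecidableEq E]
  [fintE : Fintype E]
  ends : E → Sym2 V
  loopless : ∀ e, ¬ (ends e).IsDiag

attribute [instance] Multigraph.decE Multigraph.fintE

namespace Multigraph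

/-- The set (type) of edges incident with the vertex `v`. -/
def Inc {V : Type} (G : Multigraph V) (v : V) : Type := {e : G.E // v ∈ G.ends e}

noncomputable instance {V : Type} (G : Multigraph V) (v : V) : Fintype (G.Inc v) :=
  Fintype.ofInjective (fun e : G.Inc v => e.1) Subtype.val_injective

noncomputable instance {V : Type} (G : Multigraph V) (v : V) : DecidableEq (G.Inc v) :=
  Classical.decEq _

end Multigraph

/-- The graph tensor `T_{G,n}`, represented by its array of coefficients:
it is the set-multilinear polynomial with one mode per vertex `v`, whose mode-`v`
variables are indexed by the functions `g : I_G(v) → Fin n`, and which equals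
`∑_{f : E(G) → Fin n} ∏_{v} x^{(v)}_{f | I_G(v)}`.  Hence the coefficient of the
set-multilinear monomial `∏_v x^{(v)}_{a v}` is the number of `f : E(G) → Fin n`
whose restriction to `I_G(v)` equals `a v` for every `v`. -/
noncomputable def gTensor (F : Type) [Field F] {V : Type} (G : Multigraph V) (n : ℕ) :
    (∀ v : V, G.Inc v → Fin n) → F :=
  fun a => ∑ f : G.E → Fin n,
    if ∀ (v : V) (e : G.Inc v), a v e = f e.1 then 1 else 0

/-- Two tensors (given by their coefficient arrays, with modes indexed by `ι` resp. `κ`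
and with mode variable sets `X i` resp. `Y j`) are equivalent if one is obtained from the
other by a bijective renaming of variables that is bijective on modes. -/
def TEquiv {F : Type} [Field F] {ι κ : Type} {X : ι → Type} {Y : κ → Type}
    (S : (∀ i, X i) → F) (T : (∀ j, Y j) → F) : Prop :=
  ∃ (σ : ι ≃ κ) (e : ∀ i, X i ≃ Y (σ i)),
    ∀ b : ∀ j, Y j, T b = S fun i => (e i).symm (b (σ i))

/-- The Kronecker product of two tensors with the same mode index type `ι`:
the `i`-th mode of `S ⊗ T` has variable set `X i × Y i`, and the coefficients multiply. -/
def kron {F : Type} [Field F] {ι : Type} {X Y : ι → Type}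
    (S : (∀ i, X i) → F) (T : (∀ i, Y i) → F) : (∀ i, X i × Y i) → F :=
  fun c => S (fun i => (c i).1) * T (fun i => (c i).2)

/-- The `k`-th Kronecker power of a `d`-mode tensor with `n` variables per mode. -/
def kronPow {F : Type} [Field F] {d n : ℕ} (T : (Fin d → Fin n) → F) (k : ℕ) :
    (Fin d → (Fin k → Fin n)) → F :=
  fun a => ∏ s : Fin k, T fun i => a i s

/-- The rank of a tensor: the least `r` such that `T` is the sum of `r` products of
linear forms, one linear form per mode (a linear form on mode `i` is recorded by its
coefficient vector `X i → F`). -/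
noncomputable def tensorRank {F : Type} [Field F] {ι : Type} [Fintype ι] {X : ι → Type}
    (T : (∀ i, X i) → F) : ℕ :=
  sInf {r : ℕ | ∃ ℓ : Fin r → (∀ i, X i → F),
    ∀ a : ∀ i, X i, T a = ∑ s : Fin r, ∏ i, ℓ s i (a i)}

/-- `S` is a restriction of `T` (written `S ≤ T`): there is a bijection `σ` between the
modes of `T` and the modes of `S` such that `S` is obtained from `T` by substituting for
each variable of mode `j` of `T` a linear form (recorded by its coefficient vector `M j y`)
in the variables of mode `σ j` of `S`. -/
def Restrict {F : Type} [Field F] {ι κ : Type} [Fintype κ] [DecidableEq κ]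
    {X : ι → Type} {Y : κ → Type} [∀ j, Fintype (Y j)]
    (S : (∀ i, X i) → F) (T : (∀ j, Y j) → F) : Prop :=
  ∃ (σ : κ ≃ ι) (M : ∀ j, Y j → X (σ j) → F),
    ∀ a : ∀ i, X i, S a = ∑ b : ∀ j, Y j, T b * ∏ j, M j (b j) (a (σ j))

/-- The tensor, viewed as an honest (set-multilinear) polynomial in the variables
`Σ i, X i`. -/
noncomputable def toPoly {F : Type} [Field F] {ι : Type} [Fintype ι] [DecidableEq ι]
    {X : ι → Type} [∀ i, Fintype (X i)] (T : (∀ i, X i) → F) :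
    MvPolynomial (Σ i, X i) F :=
  ∑ a : ∀ i, X i, MvPolynomial.C (T a) * ∏ i, MvPolynomial.X (⟨i, a i⟩ : Σ i, X i)

/-- `S` is a simple projection of `T` (written `S ≤ₛ T`): `S` is obtained from `T` by a
substitution assigning to each variable of `T` either a scalar or a variable of `S`, in
such a way that the image of the variable set of each mode of `T` meets the variable set
of at most one mode of `S`. -/
def SimpleProj {F : Type} [Field F] {ι κ : Type} [Fintype ι] [DecidableEq ι]
    [Fintype κ] [DecidableEq κ] {X : ι → Type} {Y : κ → Type}
    [∀ i, Fintype (X i)] [∀ j, Fintype (Y j)]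
    (S : (∀ i, X i) → F) (T : (∀ j, Y j) → F) : Prop :=
  ∃ s : (Σ j, Y j) → F ⊕ (Σ i, X i),
    (∀ (j : κ) (y y' : Y j) (p p' : Σ i, X i),
        s ⟨j, y⟩ = Sum.inr p → s ⟨j, y'⟩ = Sum.inr p' → p.1 = p'.1) ∧
    toPoly S = MvPolynomial.aeval
      (fun q => Sum.elim (fun c => (MvPolynomial.C c : MvPolynomial (Σ i, X i) F))
        (fun p => MvPolynomial.X p) (s q)) (toPoly T)

/-- `H` embeds into `G`, i.e. `H` is isomorphic to a subgraph of `G`: there are injections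
on vertices and on edges preserving the end-vertex assignment. -/
def EmbedsIn {V W : Type} (H : Multigraph V) (G : Multigraph W) : Prop :=
  ∃ (φ : V → W) (ψ : H.E → G.E), Function.Injective φ ∧ Function.Injective ψ ∧
    ∀ e, G.ends (ψ e) = (H.ends e).map φ
namespace Multigraph

/-- Subdivision of the single edge `e₀` of `H`, whose ends are `u` and `v`: a new vertex
`w` is inserted, the edge `e₀` is deleted, and new edges `uw` and `vw` are inserted.
(The edge label `e₀` is reused for the new edge `uw`, and the extra `Sum.inr ()` edge
is the new edge `vw`.) -/
noncomputable def subdivide {W : Type} (H : Multigraph W) (e₀ : H.E) :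
    Multigraph (W ⊕ Unit) where
  E := H.E ⊕ Unit
  ends := Sum.elim
    (fun e => if e = e₀ then s(Sum.inl (H.ends e₀).out.1, Sum.inr ())
              else (H.ends e).map Sum.inl)
    (fun _ => s(Sum.inl (H.ends e₀).out.2, Sum.inr ()))
  loopless := by
    rintro (e | u) h
    · dsimp at h
      by_cases he : e = e₀
      · rw [if_pos he] at h
        simpa using Sym2.mk_isDiag_iff.mp h
      · rw [if_neg he] at h
        exact H.loopless e ((Sym2.isDiag_map Sum.inl_injective).mp h)
    · simpa using Sym2.mk_isDiag_iff.mp h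

end Multigraph

/-- `Subdivision G G'` says that `G'` is a subdivision of `G`, i.e. `G'` is obtained
from `G` by subdividing edges zero or more times. -/
inductive Subdivision : {V : Type} → Multigraph V → {W : Type} → Multigraph W → Prop
  | refl {V : Type} (G : Multigraph V) : Subdivision G G
  | step {V W : Type} (G : Multigraph V) (H : Multigraph W) (e : H.E) :
      Subdivision G H → Subdivision G (H.subdivide e)

/-- `H` is (isomorphic to) a topological subgraph of `G`: some subdivision of `H` is
isomorphic to a subgraph of `G`. -/
def TopologicalIn {V W : Type} (H : Multigraph V) (G : Multigraph W) : Prop :=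
  ∃ (V' : Type) (H' : Multigraph V'), Subdivision H H' ∧ EmbedsIn H' G

set_option maxHeartbeats 1000000 in
lemma toPoly_gTensor {F : Type} [Field F] {V : Type} [Fintype V] [DecidableEq V] (G : Multigraph V) (n : ℕ) :
    toPoly (gTensor F G n) =
      ∑ f : G.E → Fin n, ∏ v : V, (X ⟨v, fun e => f e.1⟩ : MvPolynomial (Σ v : V, (G.Inc v → Fin n)) F) := by
  unfold toPoly gTensor
  simp only [map_sum, Finset.sum_mul]
  rw [Finset.sum_comm]
  refine Finset.sum_congr rfl fun f _ => ?_
  have key : ∀ a : ∀ v : V, G.Inc v → Fin n,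
      (∀ (v : V) (e : G.Inc v), a v e = f e.1) ↔ a = fun v e => f e.1 := by
    intro a
    constructor
    · intro h; funext v e; exact h v e
    · intro h v e; rw [h]
  calc _ = ∑ a : ∀ v, G.Inc v → Fin n,
        (if a = (fun v e => f e.1) then (∏ v, (X (⟨v, a v⟩ : Σ v : V, (G.Inc v → Fin n)) : MvPolynomial (Σ v : V, (G.Inc v → Fin n)) F)) else 0) := by
        refine Finset.sum_congr rfl fun a _ => ?_
        by_cases h : a = fun v e => f e.1
        · rw [if_pos ((key a).mpr h), if_pos h]; simp
        · rw [if_neg (fun hh => h ((key a).mp hh)), if_neg h]; simp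
    _ = ∏ v : V, (X (⟨v, fun e => f e.1⟩ : Σ v : V, (G.Inc v → Fin n)) : MvPolynomial (Σ v : V, (G.Inc v → Fin n)) F) := by
        rw [Finset.sum_ite_eq' Finset.univ (fun v e => f e.1)
          (fun a => ∏ v, (X (⟨v, a v⟩ : Σ v : V, (G.Inc v → Fin n)) : MvPolynomial (Σ v : V, (G.Inc v → Fin n)) F))]
        simp
lemma simpleProj_refl {F : Type} [Field F] {ι : Type} [Fintype ι] [DecidableEq ι]
    {X : ι → Type} [∀ i, Fintype (X i)] (T : (∀ i, X i) → F) : SimpleProj T T := by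
  refine ⟨Sum.inr, ?_, ?_⟩
  · rintro j y y' p p' hp hp'
    cases hp; cases hp'; rfl
  · have : (fun q : Σ i, X i => Sum.elim (fun c => (C c : MvPolynomial (Σ i, X i) F))
        (fun p => MvPolynomial.X p) (Sum.inr q)) = MvPolynomial.X := rfl
    rw [this, aeval_X_left_apply]

lemma simpleProj_trans {F : Type} [Field F] {ι κ lam : Type}
    [Fintype ι] [DecidableEq ι] [Fintype κ] [DecidableEq κ] [Fintype lam] [DecidableEq lam]
    {X : ι → Type} {Y : κ → Type} {Z : lam → Type}
    [∀ i, Fintype (X i)] [∀ j, Fintype (Y j)] [∀ k, Fintype (Z k)]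
    {A : (∀ i, X i) → F} {B : (∀ j, Y j) → F} {C' : (∀ k, Z k) → F}
    (h1 : SimpleProj A B) (h2 : SimpleProj B C') : SimpleProj A C' := by
  obtain ⟨s1, hm1, he1⟩ := h1
  obtain ⟨s2, hm2, he2⟩ := h2
  refine ⟨fun q => Sum.elim Sum.inl s1 (s2 q), ?_, ?_⟩
  · rintro k z z' p p' hp hp'
    rcases hq : s2 ⟨k, z⟩ with c | q
    · simp only [hq, Sum.elim_inl] at hp; exact absurd hp (by simp)
    rcases hq' : s2 ⟨k, z'⟩ with c' | q'
    · simp only [hq', Sum.elim_inl] at hp'; exact absurd hp' (by simp)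
    simp only [hq, Sum.elim_inr] at hp
    simp only [hq', Sum.elim_inr] at hp'
    have hqq : q.1 = q'.1 := hm2 k z z' q q' hq hq'
    obtain ⟨j, y⟩ := q
    obtain ⟨j', y'⟩ := q'
    cases hqq
    exact hm1 j y y' p p' hp hp'
  · rw [he1, he2, comp_aeval_apply]
    have hfg : (fun i => (aeval fun q => Sum.elim (fun c => (C c : MvPolynomial ((i : ι) × X i) F))
          (fun p => MvPolynomial.X p) (s1 q))
          (Sum.elim (fun c => C c) (fun p => MvPolynomial.X p) (s2 i))) =
        (fun q => Sum.elim (fun c => C c) (fun p => MvPolynomial.X p)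
          ((fun q => Sum.elim Sum.inl s1 (s2 q)) q)) := by
      funext q
      rcases hq : s2 q with c | p
      · simp [hq]
      · simp only [hq, Sum.elim_inr]
        rcases hp : s1 p with c | p' <;> simp [hp]
    rw [hfg]
lemma simpleProj_of_gTensor {F : Type} [Field F] {V W : Type}
    [Fintype V] [DecidableEq V] [Fintype W] [DecidableEq W]
    (H : Multigraph V) (G : Multigraph W) (n : ℕ)
    (s : (Σ w : W, (G.Inc w → Fin n)) → F ⊕ (Σ v : V, (H.Inc v → Fin n)))
    (hmode : ∀ (j : W) (y y' : G.Inc j → Fin n) (p p' : Σ v : V, (H.Inc v → Fin n)),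
        s ⟨j, y⟩ = Sum.inr p → s ⟨j, y'⟩ = Sum.inr p' → p.1 = p'.1)
    (hsum : ∑ f : G.E → Fin n, ∏ w : W,
          Sum.elim (fun c => (C c : MvPolynomial (Σ v : V, (H.Inc v → Fin n)) F))
            (fun p => MvPolynomial.X p) (s ⟨w, fun e => f e.1⟩)
        = ∑ f : H.E → Fin n, ∏ v : V,
            (MvPolynomial.X ⟨v, fun e => f e.1⟩ : MvPolynomial (Σ v : V, (H.Inc v → Fin n)) F)) :
    SimpleProj (gTensor F H n) (gTensor F G n) := by
  refine ⟨s, hmode, ?_⟩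
  rw [toPoly_gTensor, toPoly_gTensor, map_sum, ← hsum]
  refine Finset.sum_congr rfl fun f _ => ?_
  rw [map_prod]
  refine Finset.prod_congr rfl fun w _ => ?_
  rw [aeval_X]
section Subdiv
variable {F : Type} [Field F] {W : Type} [Fintype W] [DecidableEq W]

def sumUnitEquiv {α γ : Type} : ((α → γ) × γ) ≃ ((α ⊕ Unit) → γ) where
  toFun := fun p => Sum.elim p.1 (fun _ => p.2)
  invFun := fun f => (fun e => f (Sum.inl e), f (Sum.inr ()))
  left_inv := fun p => rfl
  right_inv := fun f => by
    funext d
    rcases d with e | x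
    · rfl
    · cases x; rfl

omit [Fintype W] [DecidableEq W] in
lemma subdivide_facts (H : Multigraph W) (e₀ : H.E) :
    H.ends e₀ = s((H.ends e₀).out.1, (H.ends e₀).out.2) := by
  conv_lhs => rw [← (H.ends e₀).out_eq]

lemma simpleProj_subdivide (H : Multigraph W) (e₀ : H.E) (n : ℕ) :
    SimpleProj (gTensor F H n) (gTensor F (H.subdivide e₀) n) := by
  classical
  set K := H.subdivide e₀ with hK
  set u := (H.ends e₀).out.1 with hu
  set v := (H.ends e₀).out.2 with hv
  have hends : H.ends e₀ = s(u, v) := subdivide_facts H e₀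
  have hKl : ∀ e : H.E, K.ends (Sum.inl e) =
      if e = e₀ then s(Sum.inl u, Sum.inr ()) else (H.ends e).map Sum.inl := fun e => rfl
  have hKr : ∀ x : Unit, K.ends (Sum.inr x) = s(Sum.inl v, Sum.inr ()) := fun x => rfl
  have memA : (Sum.inr () : W ⊕ Unit) ∈ K.ends (Sum.inl e₀) := by
    rw [hKl, if_pos rfl, Sym2.mem_iff]; right; rfl
  have memB : (Sum.inr () : W ⊕ Unit) ∈ K.ends (Sum.inr ()) := by
    rw [hKr, Sym2.mem_iff]; right; rfl
  set a : K.Inc (Sum.inr ()) := ⟨Sum.inl e₀, memA⟩ with ha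
  set b : K.Inc (Sum.inr ()) := ⟨Sum.inr (), memB⟩ with hb
  have memI : ∀ (x : W) (e : H.Inc x), ¬(e.1 = e₀ ∧ x = v) →
      (Sum.inl x : W ⊕ Unit) ∈ K.ends (Sum.inl e.1) := by
    intro x e h
    rw [hKl]
    by_cases he : e.1 = e₀
    · rw [if_pos he]
      have hx : x = u ∨ x = v := by
        have := e.2; rw [he, hends, Sym2.mem_iff] at this; exact this
      have hxu : x = u := hx.resolve_right (fun hxv => h ⟨he, hxv⟩)
      rw [Sym2.mem_iff]; left; rw [hxu]
    · rw [if_neg he]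
      exact Sym2.mem_map.mpr ⟨x, e.2, rfl⟩
  have memV : (Sum.inl v : W ⊕ Unit) ∈ K.ends (Sum.inr ()) := by
    rw [hKr, Sym2.mem_iff]; left; rfl
  set ι : ∀ x : W, H.Inc x → K.Inc (Sum.inl x) := fun x e =>
    if h : e.1 = e₀ ∧ x = v then ⟨Sum.inr (), by rw [h.2]; exact memV⟩
    else ⟨Sum.inl e.1, memI x e h⟩ with hι
  set sb : (Σ w : W ⊕ Unit, (K.Inc w → Fin n)) → F ⊕ (Σ x : W, (H.Inc x → Fin n)) :=
    fun q => Sum.rec (motive := fun w => (K.Inc w → Fin n) → F ⊕ (Σ x : W, (H.Inc x → Fin n)))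
      (fun x g => Sum.inr ⟨x, fun e => g (ι x e)⟩)
      (fun _ g => Sum.inl (if g a = g b then 1 else 0)) q.1 q.2 with hsb
  refine simpleProj_of_gTensor H K n sb ?_ ?_
  · rintro (x | x) y y' p p' hp hp'
    · simp only [hsb] at hp hp'
      cases hp; cases hp'; rfl
    · exact absurd hp (by simp [hsb])
  · have E1 : ((H.E → Fin n) × Fin n) ≃ (K.E → Fin n) := sumUnitEquiv
    have key : ∀ (T : (K.E → Fin n) → MvPolynomial (Σ x : W, (H.Inc x → Fin n)) F),
        ∑ f, T f = ∑ p : (H.E → Fin n) × Fin n,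
          T ((sumUnitEquiv : ((H.E → Fin n) × Fin n) ≃ (K.E → Fin n)) p) :=
      fun T => (Equiv.sum_comp _ T).symm
    rw [key, Fintype.sum_prod_type]
    refine Finset.sum_congr rfl fun g _ => ?_
    refine Eq.trans (Finset.sum_congr rfl fun c _ => ?_)
      (by rw [Finset.sum_ite_eq]; simp :
        (∑ c : Fin n, if g e₀ = c then (∏ x : W, (MvPolynomial.X ⟨x, fun e => g e.1⟩ :
            MvPolynomial (Σ x : W, (H.Inc x → Fin n)) F)) else 0)
          = ∏ x : W, MvPolynomial.X ⟨x, fun e => g e.1⟩)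
    rw [Fintype.prod_sum_type]
    have hu1 : ∀ h : Unit → MvPolynomial (Σ x : W, (H.Inc x → Fin n)) F,
        (∏ x : Unit, h x) = h () := fun h => Fintype.prod_unique h
    rw [hu1]
    have hfacr : sb ⟨Sum.inr (), fun e => (sumUnitEquiv (g, c)) e.1⟩
        = Sum.inl (if g e₀ = c then 1 else 0) := by rw [hsb]; try rfl
    have hfacl : ∀ x : W, sb ⟨Sum.inl x, fun e => (sumUnitEquiv (g, c)) e.1⟩
        = Sum.inr ⟨x, fun e => (sumUnitEquiv (g, c)) (ι x e).1⟩ := fun x => by rw [hsb]; try rfl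
    rw [hfacr]
    simp only [hfacl, Sum.elim_inl, Sum.elim_inr]
    by_cases hc : g e₀ = c
    · subst hc
      rw [if_pos rfl, if_pos rfl, map_one, mul_one]
      refine Finset.prod_congr rfl fun x _ => ?_
      refine congrArg (fun t => MvPolynomial.X (⟨x, t⟩ : Σ x : W, (H.Inc x → Fin n))) ?_
      funext e
      by_cases h : e.1 = e₀ ∧ x = v
      · have : ι x e = ⟨Sum.inr (), by rw [h.2]; exact memV⟩ := by rw [hι]; exact dif_pos h
        rw [this]
        exact (congrArg g h.1).symm
      · have : ι x e = ⟨Sum.inl e.1, memI x e h⟩ := by rw [hι]; exact dif_neg h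
        rw [this]
        rfl
    · rw [if_neg hc, if_neg hc, map_zero, mul_zero]
end Subdiv
section Embed
variable {F : Type} [Field F]

lemma simpleProj_embeds {V W : Type} [Fintype V] [DecidableEq V] [Fintype W] [DecidableEq W]
    (H : Multigraph V) (G : Multigraph W) (hemb : EmbedsIn H G) (n : ℕ) (hn : 1 ≤ n) :
    SimpleProj (gTensor F H n) (gTensor F G n) := by
  classical
  obtain ⟨φ, ψ, hφ, hψ, hends⟩ := hemb
  set z : Fin n := ⟨0, hn⟩ with hz
  have mem1 : ∀ (w : W) (v : V) (_ : φ v = w) (e : H.Inc v),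
      w ∈ G.ends (ψ e.1) := by
    intro w v hv e
    rw [hends e.1, ← hv]
    exact Sym2.mem_map.mpr ⟨v, e.2, rfl⟩
  set sb : (Σ w : W, (G.Inc w → Fin n)) → F ⊕ (Σ v : V, (H.Inc v → Fin n)) :=
    fun q => if h : ∃ v', φ v' = q.1 then
        (if ∀ d : G.Inc q.1, (∀ e' : H.E, ψ e' ≠ d.1) → q.2 d = z
         then Sum.inr ⟨h.choose, fun e => q.2 ⟨ψ e.1, mem1 q.1 h.choose h.choose_spec e⟩⟩
         else Sum.inl 0)
      else Sum.inl (if ∀ d : G.Inc q.1, q.2 d = z then 1 else 0) with hsb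
  refine simpleProj_of_gTensor H G n sb ?_ ?_
  · rintro w y y' p p' hp hp'
    rw [hsb] at hp hp'
    simp only [] at hp hp'
    by_cases h : ∃ v', φ v' = w
    · rw [dif_pos h] at hp hp'
      split at hp
      · cases hp
        split at hp'
        · cases hp'; rfl
        · exact absurd hp' (by simp)
      · exact absurd hp (by simp)
    · rw [dif_neg h] at hp
      exact absurd hp (by simp)
  · -- the sum identity
    set Φ : (H.E → Fin n) → (G.E → Fin n) :=
      fun f' d => if h : ∃ e, ψ e = d then f' h.choose else z with hΦ
    have hΦψ : ∀ (f' : H.E → Fin n) (e : H.E), Φ f' (ψ e) = f' e := by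
      intro f' e
      have h : ∃ e', ψ e' = ψ e := ⟨e, rfl⟩
      rw [hΦ]
      simp only []
      rw [dif_pos h]
      exact congrArg f' (hψ h.choose_spec)
    have hΦz : ∀ (f' : H.E → Fin n) (d : G.E), (∀ e, ψ e ≠ d) → Φ f' d = z := by
      intro f' d hd
      rw [hΦ]; simp only []
      rw [dif_neg (by push_neg; exact fun e => hd e)]
    set T : (G.E → Fin n) → MvPolynomial (Σ v : V, (H.Inc v → Fin n)) F :=
      fun f => ∏ w : W, Sum.elim (fun c => (C c : MvPolynomial (Σ v : V, (H.Inc v → Fin n)) F))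
        (fun p => MvPolynomial.X p) (sb ⟨w, fun e => f e.1⟩) with hT
    show ∑ f : G.E → Fin n, T f = _
    have stepA : ∀ f : G.E → Fin n, f ∉ Finset.univ.image Φ → T f = 0 := by
      intro f hf
      have hex : ∃ d : G.E, (∀ e, ψ e ≠ d) ∧ f d ≠ z := by
        by_contra hcon
        push_neg at hcon
        apply hf
        refine Finset.mem_image.mpr ⟨fun e => f (ψ e), Finset.mem_univ _, ?_⟩
        funext d
        by_cases h : ∃ e, ψ e = d
        · rw [hΦ]; simp only []; rw [dif_pos h, h.choose_spec]
        · rw [hΦ]; simp only []; rw [dif_neg h]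
          push_neg at h
          exact (hcon d h).symm
      obtain ⟨d, hd1, hd2⟩ := hex
      have hmem : (G.ends d).out.1 ∈ G.ends d := Sym2.out_fst_mem _
      set w₀ := (G.ends d).out.1 with hw₀
      rw [hT]
      refine Finset.prod_eq_zero (Finset.mem_univ w₀) ?_
      by_cases h : ∃ v', φ v' = w₀
      · have hcond : ¬ ∀ d' : G.Inc w₀, (∀ e' : H.E, ψ e' ≠ d'.1) → f d'.1 = z := by
          intro hall
          exact hd2 (hall ⟨d, hmem⟩ hd1)
        rw [hsb]; simp only []
        rw [dif_pos h, if_neg hcond]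
        simp
      · have hcond : ¬ ∀ d' : G.Inc w₀, f d'.1 = z := by
          intro hall; exact hd2 (hall ⟨d, hmem⟩)
        rw [hsb]; simp only []
        rw [dif_neg h, if_neg hcond]
        simp
    have stepB : ∀ f' : H.E → Fin n, T (Φ f') =
        ∏ v : V, (MvPolynomial.X ⟨v, fun e => f' e.1⟩ :
          MvPolynomial (Σ v : V, (H.Inc v → Fin n)) F) := by
      intro f'
      rw [hT]
      have fac1 : ∀ (w : W) (h : ∃ v', φ v' = w),
          sb ⟨w, fun e => Φ f' e.1⟩ = Sum.inr ⟨h.choose, fun e => f' e.1⟩ := by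
        intro w h
        rw [hsb]; simp only []
        rw [dif_pos h, if_pos (show ∀ d : G.Inc w, (∀ e' : H.E, ψ e' ≠ d.1) → Φ f' d.1 = z
          from fun d hd => hΦz f' d.1 hd)]
        congr 1
        refine congrArg (fun t => (⟨h.choose, t⟩ : Σ v : V, (H.Inc v → Fin n))) ?_
        funext e
        exact hΦψ f' e.1
      have fac2 : ∀ (w : W), ¬(∃ v', φ v' = w) →
          sb ⟨w, fun e => Φ f' e.1⟩ = Sum.inl 1 := by
        intro w h
        rw [hsb]; simp only []
        rw [dif_neg h, if_pos]
        intro d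
        refine hΦz f' d.1 (fun e' he' => h ?_)
        have : w ∈ G.ends (ψ e') := he' ▸ d.2
        rw [hends e'] at this
        obtain ⟨x, hx1, hx2⟩ := Sym2.mem_map.mp this
        exact ⟨x, hx2⟩
      calc ∏ w : W, Sum.elim (fun c => (C c : MvPolynomial (Σ v : V, (H.Inc v → Fin n)) F))
            (fun p => MvPolynomial.X p) (sb ⟨w, fun e => Φ f' e.1⟩)
          = ∏ w ∈ Finset.univ.image φ, Sum.elim (fun c => (C c : MvPolynomial (Σ v : V, (H.Inc v → Fin n)) F))
            (fun p => MvPolynomial.X p) (sb ⟨w, fun e => Φ f' e.1⟩) := by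
            refine (Finset.prod_subset (Finset.subset_univ _) ?_).symm
            intro w _ hw
            have h : ¬(∃ v', φ v' = w) := by
              intro ⟨v', hv'⟩
              exact hw (Finset.mem_image.mpr ⟨v', Finset.mem_univ _, hv'⟩)
            rw [fac2 w h]
            simp
        _ = ∏ v : V, Sum.elim (fun c => (C c : MvPolynomial (Σ v : V, (H.Inc v → Fin n)) F))
            (fun p => MvPolynomial.X p) (sb ⟨φ v, fun e => Φ f' e.1⟩) := by
            refine Finset.prod_image ?_
            intro v _ v' _ h
            exact hφ h
        _ = ∏ v : V, MvPolynomial.X ⟨v, fun e => f' e.1⟩ := by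
            refine Finset.prod_congr rfl fun v _ => ?_
            have h : ∃ v', φ v' = φ v := ⟨v, rfl⟩
            rw [fac1 (φ v) h]
            have hv : h.choose = v := hφ h.choose_spec
            simp only [Sum.elim_inr]
            congr 1
            rw [hv]
    calc ∑ f : G.E → Fin n, T f
        = ∑ f ∈ Finset.univ.image Φ, T f := by
          refine (Finset.sum_subset (Finset.subset_univ _) ?_).symm
          intro f _ hf
          exact stepA f hf
      _ = ∑ f' : H.E → Fin n, T (Φ f') := by
          refine Finset.sum_image ?_
          intro f1 _ f2 _ h
          funext e
          have := congrFun h (ψ e)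
          rwa [hΦψ, hΦψ] at this
      _ = ∑ f' : H.E → Fin n, ∏ v : V, MvPolynomial.X ⟨v, fun e => f' e.1⟩ := by
          exact Finset.sum_congr rfl fun f' _ => stepB f'
end Embed

lemma Subdivision.finite' {V W : Type} {H : Multigraph V} {K : Multigraph W}
    (h : Subdivision H K) (hV : Finite V) : Finite W := by
  induction h with
  | refl G => exact hV
  | step G H e hsub ih =>
    haveI := ih
    infer_instance

lemma simpleProj_irrel {F : Type} [Field F] {ι κ : Type} {X : ι → Type} {Y : κ → Type}
    (i1 i2 : Fintype ι) (d1 d2 : DecidableEq ι) (j1 j2 : Fintype κ) (e1 e2 : DecidableEq κ)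
    (fx1 fx2 : ∀ i, Fintype (X i)) (fy1 fy2 : ∀ j, Fintype (Y j))
    (S : (∀ i, X i) → F) (T : (∀ j, Y j) → F)
    (h : @SimpleProj F _ ι κ i1 d1 j1 e1 X Y fx1 fy1 S T) :
    @SimpleProj F _ ι κ i2 d2 j2 e2 X Y fx2 fy2 S T := by
  cases Subsingleton.elim i1 i2
  cases Subsingleton.elim d1 d2
  cases Subsingleton.elim j1 j2
  cases Subsingleton.elim e1 e2
  cases Subsingleton.elim fx1 fx2
  cases Subsingleton.elim fy1 fy2
  exact h

lemma simpleProj_of_subdivision {F : Type} [Field F] (n : ℕ) {V W : Type}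
    {H : Multigraph V} {K : Multigraph W} (h : Subdivision H K) :
    ∀ (iV : Fintype V) (dV : DecidableEq V) (iW : Fintype W) (dW : DecidableEq W),
      SimpleProj (gTensor F H n) (gTensor F K n) := by
  induction h with
  | refl G =>
    intro iV dV iW dW
    cases Subsingleton.elim iV iW
    cases Subsingleton.elim dV dW
    exact simpleProj_refl _
  | step G H e hsub ih =>
    rename_i W'
    intro iV dV iW' dW'
    have hfin : Finite W' := by
      have : Finite (W' ⊕ Unit) := @Finite.of_fintype _ iW'
      exact Finite.of_injective (fun w : W' => (Sum.inl w : W' ⊕ Unit)) Sum.inl_injective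
    letI iW : Fintype W' := Fintype.ofFinite W'
    letI dW : DecidableEq W' := Classical.decEq W'
    refine @simpleProj_trans F _ V W' (W' ⊕ Unit) iV dV iW dW iW' dW' _ _ _ _ _ _ _ _ _
      (ih iV dV iW dW) ?_
    exact simpleProj_irrel _ _ _ _ _ _ _ _ _ _ _ _ _ _ (simpleProj_subdivide H e n)

/-- If `H` is isomorphic to a topological subgraph of `G` and `n ≥ 1`,
then `T_{H,n}` is a simple projection of `T_{G,n}`: `T_{H,n} ≤ₛ T_{G,n}`. -/
theorem gTensor_simpleProj_of_topologicalSubgraph (F : Type) [Field F] {V W : Type}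
    [Fintype V] [DecidableEq V] [Fintype W] [DecidableEq W]
    (H : Multigraph V) (G : Multigraph W) (hHG : TopologicalIn H G) (n : ℕ) (hn : 1 ≤ n) :
    SimpleProj (gTensor F H n) (gTensor F G n) := by
  obtain ⟨V', H', hsub, hemb⟩ := hHG
  have hfin : Finite V' := hsub.finite' (Finite.of_fintype V)
  letI : Fintype V' := Fintype.ofFinite V'
  letI : DecidableEq V' := Classical.decEq V'
  exact simpleProj_trans (simpleProj_of_subdivision n hsub _ _ _ _)
    (simpleProj_embeds H' G hemb n hn)
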